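/- Let a and b be cyclically reduced words in a free group F with basis X. If the bi-infinite periodic words L(a) = ...aaa... and L(b) = ...bbb... have a common subword of length |a| + |b|, then some cyclic permutation of a and some cyclic permutation of b are both powers of a common word c. -/
import Mathlib


/-- `n`-th power of a word. -/
def listPow {A : Type*} (v : List A) (n : ℕ) : List A := (List.replicate n v).flatten

/-- A word in the alphabet `X × Bool` (letters of `X` and their inverses) is reduced
if no elementary reduction (cancellation of an adjacent inverse pair) applies. -/
def ReducedWord {X : Type*} (w : List (X × Bool)) : Prop :=
  ∀ w', ¬ FreeGroup.Red.Step w w'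

/-- A word is cyclically reduced if it is reduced and its first letter is not the
inverse of its last letter. -/
def CyclicallyReduced {X : Type*} (w : List (X × Bool)) : Prop :=
  ReducedWord w ∧ ∀ x : X, ∀ b : Bool, w.head? = some (x, b) → w.getLast? ≠ some (x, !b)

/-- `w` is a (finite) subword of the bi-infinite periodic word `L(a) = ⋯aaa⋯`,
i.e. `w` is an infix of some finite power of `a`. -/
def SubwordOfPeriodicWord {X : Type*} (a w : List (X × Bool)) : Prop :=
  ∃ m : ℕ, w <:+: listPow a m


lemma listPow_succ {A : Type*} (v : List A) (n : ℕ) :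
    listPow v (n+1) = v ++ listPow v n := by
  simp [listPow, List.replicate_succ]

lemma length_listPow {A : Type*} (v : List A) (n : ℕ) :
    (listPow v n).length = n * v.length := by
  induction n with
  | zero => simp [listPow]
  | succ n ih => rw [listPow_succ]; simp [ih, Nat.succ_mul]; ring

lemma listPow_getElem? {A : Type*} (v : List A) (m : ℕ) :
    ∀ j, j < m * v.length → (listPow v m)[j]? = v[j % v.length]? := by
  induction m with
  | zero => intro j hj; simp at hj
  | succ m ih =>
    intro j hj
    rw [listPow_succ]
    rcases lt_or_ge j v.length with h | h
    · rw [List.getElem?_append_left h, Nat.mod_eq_of_lt h]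
    · rw [List.getElem?_append_right h, ih (j - v.length) (by
        rw [Nat.succ_mul] at hj; omega), Nat.mod_eq_sub_mod h]

/-- Fine–Wilf auxiliary, ordered version. -/
lemma fw_aux {A : Type*} (l : List A) :
    ∀ n p q, p + q = n → 0 < q → q ≤ p → p + q ≤ l.length →
    (∀ j, j + p < l.length → l[j]? = l[j+p]?) →
    (∀ j, j + q < l.length → l[j]? = l[j+q]?) →
    ∀ j, j + Nat.gcd p q < l.length → l[j]? = l[j + Nat.gcd p q]? := by
  intro n
  induction n using Nat.strong_induction_on with
  | _ n IH =>
    intro p q hn hq hqp hlen hp hq'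
    rcases eq_or_lt_of_le hqp with rfl | hlt
    · rw [Nat.gcd_self]; exact hq'
    · set r := p - q with hr
      have hrpos : 0 < r := by omega
      have hper_r : ∀ j, j + r < l.length → l[j]? = l[j+r]? := by
        intro j hj
        rcases lt_or_ge (j + p) l.length with h | h
        · have h1 := hp j h
          have h2 := hq' (j + r) (by omega)
          rw [h1, h2]
          congr 1; omega
        · have h1 := hq' (j - q) (by omega)
          have h2 := hp (j - q) (by omega)
          have e1 : j - q + q = j := by omega
          have e2 : j - q + p = j + r := by omega
          rw [e1] at h1
          rw [e2] at h2
          rw [← h1, h2]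
      have hg : Nat.gcd p q = Nat.gcd q r := by
        rw [hr, Nat.gcd_comm q (p - q), Nat.gcd_sub_self_left (by omega), Nat.gcd_comm]
      rw [hg]
      rcases le_or_gt r q with hle | hlt2
      · exact IH (q + r) (by omega) q r rfl hrpos hle (by omega) hq' hper_r
      · rw [Nat.gcd_comm q r]
        exact IH (r + q) (by omega) r q rfl hq hlt2.le (by omega) hper_r hq'

/-- Fine–Wilf. -/
lemma fine_wilf {A : Type*} (l : List A) (p q : ℕ) (hp0 : 0 < p) (hq0 : 0 < q)
    (hp : ∀ j, j + p < l.length → l[j]? = l[j+p]?)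
    (hq : ∀ j, j + q < l.length → l[j]? = l[j+q]?)
    (hlen : p + q ≤ l.length) :
    ∀ j, j + Nat.gcd p q < l.length → l[j]? = l[j + Nat.gcd p q]? := by
  rcases le_or_gt q p with h | h
  · exact fw_aux l (p + q) p q rfl hq0 h hlen hp hq
  · rw [Nat.gcd_comm p q]
    exact fw_aux l (q + p) q p rfl hp0 h.le (by omega) hq hp

lemma pow_of_period {A : Type*} (g : ℕ) (hg : 0 < g) :
    ∀ (s : ℕ) (l : List A), l.length = s * g →
    (∀ j, j + g < l.length → l[j]? = l[j+g]?) →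
    l = listPow (l.take g) s := by
  intro s
  induction s with
  | zero =>
    intro l hl _
    have : l = [] := List.length_eq_zero_iff.mp (by simpa using hl)
    simp [this, listPow]
  | succ s ih =>
    intro l hl hper
    rw [Nat.succ_mul] at hl
    have hgl : g ≤ l.length := by omega
    rcases Nat.eq_zero_or_pos s with rfl | hs
    · have h0 : l.take g = l := List.take_of_length_le (by omega)
      rw [h0, listPow_succ, listPow]; simp
    · have hdl : (l.drop g).length = s * g := by simp [hl]
      have hdper : ∀ j, j + g < (l.drop g).length → (l.drop g)[j]? = (l.drop g)[j+g]? := by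
        intro j hj
        rw [List.getElem?_drop, List.getElem?_drop]
        have hx := hper (g + j) (by rw [hdl] at hj; omega)
        rwa [show g + j + g = g + (j + g) by omega] at hx
      have hd := ih (l.drop g) hdl hdper
      have htake : (l.drop g).take g = l.take g := by
        apply List.ext_getElem?
        intro i
        rw [List.getElem?_take, List.getElem?_take]
        split
        · rename_i hi
          rw [List.getElem?_drop]
          have hx := hper i (by nlinarith)
          rw [show g + i = i + g by omega, ← hx]
        · rfl
      rw [listPow_succ]
      conv_lhs => rw [← List.take_append_drop g l]
      rw [hd, htake]

lemma subword_index {A : Type*} (a w : List A)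
    (h : ∃ m : ℕ, w <:+: listPow a m) :
    ∃ s : ℕ, ∀ j, j < w.length → w[j]? = a[(s + j) % a.length]? := by
  obtain ⟨m, pre, post, heq⟩ := h
  have heq' : pre ++ (w ++ post) = listPow a m := by
    simpa [List.append_assoc] using heq
  refine ⟨pre.length, fun j hj => ?_⟩
  have hlen : pre.length + j < m * a.length := by
    have hl := congrArg List.length heq'
    simp [length_listPow] at hl
    omega
  have h1 : (listPow a m)[pre.length + j]? = a[(pre.length + j) % a.length]? :=
    listPow_getElem? a m _ hlen
  rw [← heq', List.getElem?_append_right (by omega),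
    Nat.add_sub_cancel_left, List.getElem?_append_left hj] at h1
  exact h1

theorem periodicity_free_group {X : Type*} (a b : List (X × Bool))
    (ha : CyclicallyReduced a) (hb : CyclicallyReduced b)
    (hna : a ≠ []) (hnb : b ≠ [])
    (hcommon : ∃ w : List (X × Bool), w.length = a.length + b.length ∧
      SubwordOfPeriodicWord a w ∧ SubwordOfPeriodicWord b w) :
    ∃ (c : List (X × Bool)) (i j s t : ℕ),
      a.rotate i = listPow c s ∧ b.rotate j = listPow c t := by
  obtain ⟨w, hwlen, hwa, hwb⟩ := hcommon
  set p := a.length with hp'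
  set q := b.length with hq'
  have hp0 : 0 < p := List.length_pos_iff.mpr hna
  have hq0 : 0 < q := List.length_pos_iff.mpr hnb
  obtain ⟨s, hsa⟩ := subword_index a w hwa
  obtain ⟨u, hub⟩ := subword_index b w hwb
  have hpa : ∀ j, j + p < w.length → w[j]? = w[j+p]? := by
    intro j hj
    rw [hsa j (by omega), hsa (j+p) (by omega)]
    congr 1
    rw [show s + (j+p) = (s+j) + p by omega, Nat.add_mod_right]
  have hqb : ∀ j, j + q < w.length → w[j]? = w[j+q]? := by
    intro j hj
    rw [hub j (by omega), hub (j+q) (by omega)]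
    congr 1
    rw [show u + (j+q) = (u+j) + q by omega, Nat.add_mod_right]
  set g := Nat.gcd p q with hg'
  have hgp : g ∣ p := Nat.gcd_dvd_left p q
  have hgq : g ∣ q := Nat.gcd_dvd_right p q
  have hgP : g ≤ p := Nat.le_of_dvd hp0 hgp
  have hgQ : g ≤ q := Nat.le_of_dvd hq0 hgq
  have hg0 : 0 < g := Nat.gcd_pos_of_pos_left q hp0
  have hgw : ∀ j, j + g < w.length → w[j]? = w[j+g]? :=
    fine_wilf w p q hp0 hq0 hpa hqb (by omega)
  have hrota : a.rotate s = w.take p := by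
    apply List.ext_getElem?
    intro k
    rcases lt_or_ge k p with hk | hk
    · rw [List.getElem?_rotate hk, List.getElem?_take, if_pos hk, hsa k (by omega),
        Nat.add_comm k s]
    · rw [List.getElem?_eq_none (by rw [List.length_rotate]; exact hk),
        List.getElem?_eq_none (by rw [List.length_take]; omega)]
  have hrotb : b.rotate u = w.take q := by
    apply List.ext_getElem?
    intro k
    rcases lt_or_ge k q with hk | hk
    · rw [List.getElem?_rotate hk, List.getElem?_take, if_pos hk, hub k (by omega),
        Nat.add_comm k u]
    · rw [List.getElem?_eq_none (by rw [List.length_rotate]; exact hk),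
        List.getElem?_eq_none (by rw [List.length_take]; omega)]
  have hta : w.take p = listPow (w.take g) (p / g) := by
    have h1 : w.take p = listPow ((w.take p).take g) (p / g) := by
      apply pow_of_period g hg0
      · rw [List.length_take, Nat.div_mul_cancel hgp]; omega
      · intro j hj
        rw [List.length_take] at hj
        have hj1 : j + g < p := by omega
        rw [List.getElem?_take, List.getElem?_take, if_pos (by omega), if_pos hj1]
        exact hgw j (by omega)
    rwa [List.take_take, min_eq_left hgP] at h1
  have htb : w.take q = listPow (w.take g) (q / g) := by
    have h1 : w.take q = listPow ((w.take q).take g) (q / g) := by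
      apply pow_of_period g hg0
      · rw [List.length_take, Nat.div_mul_cancel hgq]; omega
      · intro j hj
        rw [List.length_take] at hj
        have hj1 : j + g < q := by omega
        rw [List.getElem?_take, List.getElem?_take, if_pos (by omega), if_pos hj1]
        exact hgw j (by omega)
    rwa [List.take_take, min_eq_left hgQ] at h1
  exact ⟨w.take g, s, u, p / g, q / g, by rw [hrota, hta], by rw [hrotb, htb]⟩
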